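/- For every number of resources m ≥ 2 and every strictly monotone function g : [0,1]^m → ℝ, the mechanism F_g satisfies SI, EF, PO, and SP. -/

import Mathlib

open Finset
open scoped Classical

/-- A valid instance: all demands lie in `(0,1]` and every agent has a resource
with normalized demand `1` (its dominant resource). -/
def ValidInstance {n m : ℕ} (d : Fin n → Fin m → ℝ) : Prop :=
  (∀ i r, 0 < d i r ∧ d i r ≤ 1) ∧ ∀ i, ∃ r, d i r = 1

/-- Entrywise nonnegative allocation. -/
def NonnegAlloc {n m : ℕ} (A : Fin n → Fin m → ℝ) : Prop := ∀ i r, 0 ≤ A i r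

/-- A feasible allocation: nonnegative and no resource over-allocated. -/
def Feasible {n m : ℕ} (A : Fin n → Fin m → ℝ) : Prop :=
  NonnegAlloc A ∧ ∀ r, ∑ i, A i r ≤ 1

/-- Leontief utility of a bundle `Av` for demand vector `dv`:
the largest `y ≥ 0` with `y * dv r ≤ Av r` for all `r`. -/
noncomputable def util {m : ℕ} (dv Av : Fin m → ℝ) : ℝ :=
  sSup {y : ℝ | 0 ≤ y ∧ ∀ r, y * dv r ≤ Av r}

/-- Share incentive: every agent gets utility at least `1/n`. -/
def SI {n m : ℕ} (d A : Fin n → Fin m → ℝ) : Prop :=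
  ∀ i, (1 : ℝ) / n ≤ util (d i) (A i)

/-- Envy-freeness: no agent prefers another agent's bundle. -/
def EF {n m : ℕ} (d A : Fin n → Fin m → ℝ) : Prop :=
  ∀ i j, util (d i) (A j) ≤ util (d i) (A i)

/-- Social welfare: the sum of all utilities. -/
noncomputable def SW {n m : ℕ} (d A : Fin n → Fin m → ℝ) : ℝ :=
  ∑ i, util (d i) (A i)

/-- Utilization: the minimum over resources of the total allocated amount. -/
noncomputable def Util {n m : ℕ} (A : Fin n → Fin m → ℝ) : ℝ :=
  ⨅ r : Fin m, ∑ i, A i r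

/-- Pareto optimality of an allocation. -/
def PO {n m : ℕ} (d A : Fin n → Fin m → ℝ) : Prop :=
  ¬ ∃ A' : Fin n → Fin m → ℝ, Feasible A' ∧
      (∀ i, util (d i) (A i) ≤ util (d i) (A' i)) ∧
      ∃ i, util (d i) (A i) < util (d i) (A' i)

/-- Agents whose dominant resource is resource 1 (index `0`). -/
noncomputable def G1 {n m : ℕ} [NeZero m] (d : Fin n → Fin m → ℝ) : Finset (Fin n) :=
  Finset.univ.filter (fun i => d i 0 = 1)

/-- Agents whose demand for resource 1 (index `0`) is below `1`. -/
noncomputable def G2 {n m : ℕ} [NeZero m] (d : Fin n → Fin m → ℝ) : Finset (Fin n) :=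
  Finset.univ.filter (fun i => d i 0 < 1)

/-- Minority ratio `α = |G2| / n` for two resources. -/
def MinorityRatio {n : ℕ} (d : Fin n → Fin 2 → ℝ) (α : ℚ) : Prop :=
  ((G2 d).card : ℚ) = α * n

/-- The DRF allocation: every agent gets `x* • d i` with
`x* = 1 / max_r Σ_j d j r`. -/
noncomputable def DRF {n m : ℕ} (d : Fin n → Fin m → ℝ) : Fin n → Fin m → ℝ :=
  fun i r => (1 / ⨆ r' : Fin m, ∑ j, d j r') * d i r

/-- The F1 allocation at water level `t`: agents in `G1` get dominant share `1/n`;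
an agent `i` with `d i 0 < 1` gets `max (d i 0 / n) t` of resource 1, i.e. has
scale factor `max (1/n) (t / d i 0)`. -/
noncomputable def F1At {n m : ℕ} [NeZero m] (d : Fin n → Fin m → ℝ) (t : ℝ) :
    Fin n → Fin m → ℝ :=
  fun i r => (if d i 0 = 1 then (1 : ℝ) / n else max ((1 : ℝ) / n) (t / d i 0)) * d i r

/-- The F1 allocation: F1 at the largest feasible water level. -/
noncomputable def F1 {n m : ℕ} [NeZero m] (d : Fin n → Fin m → ℝ) : Fin n → Fin m → ℝ :=
  F1At d (sSup {t : ℝ | 0 ≤ t ∧ Feasible (F1At d t)})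

/-- Strict elementwise monotonicity of `g` on `[0,1]^m`. -/
def MonotoneOn01 {m : ℕ} (g : (Fin m → ℝ) → ℝ) : Prop :=
  ∀ v w : Fin m → ℝ, (∀ r, 0 ≤ w r) → (∀ r, v r ≤ 1) → (∀ r, w r < v r) → g w < g v

/-- The output of mechanism `F_g`: a feasible non-wasteful allocation in which
every agent has scale factor at least `1/n`, all agents whose scale factor
exceeds `1/n` share the common minimal `g`-value `t`, all `g`-values are at
least `t`, and some resource is fully allocated. -/
def IsFgAlloc {n m : ℕ} (g : (Fin m → ℝ) → ℝ) (d A : Fin n → Fin m → ℝ) : Prop :=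
  ∃ y : Fin n → ℝ, (∀ i r, A i r = y i * d i r) ∧ (∀ i, (1 : ℝ) / n ≤ y i) ∧
    (∃ t : ℝ, (∀ i, t ≤ g (A i)) ∧ ∀ i, (1 : ℝ) / n < y i → g (A i) = t) ∧
    Feasible A ∧ ∃ r, ∑ i, A i r = 1

/-! Let `Aᵢ = yᵢ dᵢ` be the output, with a resource that is fully allocated. A Pareto improvement
would have to give every agent at least as much of that resource and someone strictly more.
If `i` envies `j`, then `Aᵢ < Aⱼ` on every resource and `yⱼ > yᵢ ≥ 1/n`, so `j` was raised by
the water-filling and `g(Aⱼ) ≤ g(Aᵢ) < g(Aⱼ)`. If `i` gains by reporting `d'ᵢ`, producing `A'`,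
then `Aᵢ < A'ᵢ` everywhere, so on the saturated resource some `j ≠ i` shrinks, and `j` was raised
in `A`; the gain also forces `i` to be raised in `A'`, and
`g(A'ᵢ) ≤ g(A'ⱼ) < g(Aⱼ) ≤ g(Aᵢ) < g(A'ᵢ)`. -/

section Leontief

variable {m : ℕ} {dv B : Fin m → ℝ} {y : ℝ}

lemma util_mul_le (hd : ∀ r, 0 < dv r) (hB : ∀ r, 0 ≤ B r) (r : Fin m) :
    util dv B * dv r ≤ B r := by
  have hne : {z : ℝ | 0 ≤ z ∧ ∀ r, z * dv r ≤ B r}.Nonempty :=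
    ⟨0, le_rfl, fun r => by simpa using hB r⟩
  exact (le_div_iff₀ (hd r)).1 (csSup_le hne fun z hz => (le_div_iff₀ (hd r)).2 (hz.2 r))

lemma le_util [Nonempty (Fin m)] (hd : ∀ r, 0 < dv r) (hy : 0 ≤ y) (h : ∀ r, y * dv r ≤ B r) : y ≤ util dv B := by
  obtain ⟨r₀⟩ := ‹Nonempty (Fin m)›
  refine le_csSup ⟨B r₀ / dv r₀, fun z hz => ?_⟩ ⟨hy, h⟩
  exact (le_div_iff₀ (hd r₀)).2 (hz.2 r₀)

lemma util_eq_of_eq_mul [Nonempty (Fin m)] (hd : ∀ r, 0 < dv r) (hy : 0 ≤ y) (hB : ∀ r, B r = y * dv r) :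
    util dv B = y := by
  obtain ⟨r₀⟩ := ‹Nonempty (Fin m)›
  have hB0 : ∀ r, 0 ≤ B r := fun r => (hB r).symm ▸ mul_nonneg hy (hd r).le
  refine le_antisymm ?_ (le_util hd hy fun r => (hB r).ge)
  have := util_mul_le hd hB0 r₀
  rw [hB r₀] at this
  exact le_of_mul_le_mul_right this (hd r₀)

lemma mul_le_of_le_util (hd : ∀ r, 0 < dv r) (hB : ∀ r, 0 ≤ B r) (h : y ≤ util dv B) (r : Fin m) :
    y * dv r ≤ B r :=
  (mul_le_mul_of_nonneg_right h (hd r).le).trans (util_mul_le hd hB r)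

lemma mul_lt_of_lt_util (hd : ∀ r, 0 < dv r) (hB : ∀ r, 0 ≤ B r) (h : y < util dv B) (r : Fin m) :
    y * dv r < B r :=
  (mul_lt_mul_of_pos_right h (hd r)).trans_le (util_mul_le hd hB r)

lemma util_le_of_eq_one (hd : ∀ r, 0 < dv r) (hB : ∀ r, 0 ≤ B r) {r : Fin m} (hr : dv r = 1) :
    util dv B ≤ B r := by
  simpa [hr] using util_mul_le hd hB r

end Leontief

lemma Finset.exists_ne_lt_of_lt_of_sum_le {ι : Type*} [Fintype ι] {a b : ι → ℝ} {i : ι}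
    (hsum : ∑ j, b j ≤ ∑ j, a j) (hi : a i < b i) : ∃ j ≠ i, b j < a j := by
  by_contra! h
  have : ∑ j, a j < ∑ j, b j :=
    Finset.sum_lt_sum (fun j _ => (eq_or_ne j i).elim (· ▸ hi.le) (h j)) ⟨i, mem_univ i, hi⟩
  linarith

section Allocations

variable {n m : ℕ} {g : (Fin m → ℝ) → ℝ} {d A : Fin n → Fin m → ℝ}

lemma ValidInstance.pos (hd : ValidInstance d) (i : Fin n) (r : Fin m) : 0 < d i r :=
  (hd.1 i r).1

lemma ValidInstance.nonempty (hd : ValidInstance d) (i : Fin n) : Nonempty (Fin m) :=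
  let ⟨r, _⟩ := hd.2 i
  ⟨r⟩

lemma Feasible.le_one (hA : Feasible A) (i : Fin n) (r : Fin m) : A i r ≤ 1 :=
  (Finset.single_le_sum (fun j _ => hA.1 j r) (mem_univ i)).trans (hA.2 r)

lemma MonotoneOn01.lt_of_feasible (hg : MonotoneOn01 g) {A' : Fin n → Fin m → ℝ}
    (hA : Feasible A) (hA' : Feasible A') {i j : Fin n} (h : ∀ r, A i r < A' j r) :
    g (A i) < g (A' j) :=
  hg _ _ (hA.1 i) (hA'.le_one j) h

lemma util_eq_scale (hd : ValidInstance d) {y : Fin n → ℝ} (hy : ∀ i r, A i r = y i * d i r)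
    (hy1 : ∀ i, (1 : ℝ) / n ≤ y i) (i : Fin n) : util (d i) (A i) = y i :=
  have := hd.nonempty i
  util_eq_of_eq_mul (hd.pos i) ((one_div_nonneg.2 n.cast_nonneg).trans (hy1 i)) (hy i)

namespace IsFgAlloc

lemma feasible (hA : IsFgAlloc g d A) : Feasible A :=
  let ⟨_, _, _, _, hF, _⟩ := hA
  hF

lemma exists_sum_eq_one (hA : IsFgAlloc g d A) : ∃ r, ∑ i, A i r = 1 :=
  let ⟨_, _, _, _, _, hr⟩ := hA
  hr

lemma eq_util_mul (hd : ValidInstance d) (hA : IsFgAlloc g d A) (i : Fin n) (r : Fin m) :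
    A i r = util (d i) (A i) * d i r := by
  obtain ⟨y, hy, hy1, -⟩ := hA
  rw [util_eq_scale hd hy hy1]
  exact hy i r

lemma si (hd : ValidInstance d) (hA : IsFgAlloc g d A) : SI d A := by
  obtain ⟨y, hy, hy1, -⟩ := hA
  intro i
  rw [util_eq_scale hd hy hy1]
  exact hy1 i

lemma g_le_of_one_div_lt_util (hd : ValidInstance d) (hA : IsFgAlloc g d A) {j : Fin n}
    (hj : (1 : ℝ) / n < util (d j) (A j)) (k : Fin n) : g (A j) ≤ g (A k) := by
  obtain ⟨y, hy, hy1, ⟨t, ht, hraised⟩, -⟩ := hA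
  rw [util_eq_scale hd hy hy1] at hj
  exact (hraised j hj).trans_le (ht k)

lemma apply_le_util (hd : ValidInstance d) (hA : IsFgAlloc g d A) (i : Fin n) (r : Fin m) :
    A i r ≤ util (d i) (A i) := by
  have hu := (hA.si hd i).trans' (one_div_nonneg.2 n.cast_nonneg)
  rw [hA.eq_util_mul hd]
  exact mul_le_of_le_one_right hu (hd.1 i r).2

lemma mul_lt_apply_of_util_lt (hd : ValidInstance d) (hA : IsFgAlloc g d A) {B : Fin m → ℝ}
    (hB : ∀ r, 0 ≤ B r) {i : Fin n} (h : util (d i) (A i) < util (d i) B) (r : Fin m) :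
    A i r < B r := by
  rw [hA.eq_util_mul hd]
  exact mul_lt_of_lt_util (hd.pos i) hB h r

lemma one_div_lt_util_of_util_lt (hd : ValidInstance d) (hA : IsFgAlloc g d A)
    {d' A' : Fin n → Fin m → ℝ} (hd' : ValidInstance d') (hA' : IsFgAlloc g d' A') {i k : Fin n}
    (h : util (d i) (A i) < util (d i) (A' k)) : (1 : ℝ) / n < util (d' k) (A' k) := by
  obtain ⟨r, hr⟩ := hd.2 i
  calc (1 : ℝ) / n ≤ util (d i) (A i) := hA.si hd i
    _ < util (d i) (A' k) := h
    _ ≤ A' k r := util_le_of_eq_one (hd.pos i) (hA'.feasible.1 k) hr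
    _ ≤ util (d' k) (A' k) := hA'.apply_le_util hd' k r

lemma ef (hg : MonotoneOn01 g) (hd : ValidInstance d) (hA : IsFgAlloc g d A) : EF d A := by
  intro i j
  by_contra! hlt
  have hF := hA.feasible
  have hgrow : ∀ r, A i r < A j r := hA.mul_lt_apply_of_util_lt hd (hF.1 j) hlt
  have hj_raised := hA.one_div_lt_util_of_util_lt hd hd hA hlt
  exact (hg.lt_of_feasible hF hF hgrow).not_ge (hA.g_le_of_one_div_lt_util hd hj_raised i)

lemma po (hd : ValidInstance d) (hA : IsFgAlloc g d A) : PO d A := by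
  rintro ⟨A', hA', hge, i, hgt⟩
  obtain ⟨r, hr⟩ := hA.exists_sum_eq_one
  obtain ⟨j, -, hj⟩ := Finset.exists_ne_lt_of_lt_of_sum_le ((hA'.2 r).trans hr.ge)
    (hA.mul_lt_apply_of_util_lt hd (hA'.1 i) hgt r)
  refine hj.not_ge ?_
  rw [hA.eq_util_mul hd]
  exact mul_le_of_le_util (hd.pos j) (hA'.1 j) (hge j) r

lemma util_le_of_misreport (hg : MonotoneOn01 g) (hd : ValidInstance d) {d' A' : Fin n → Fin m → ℝ}
    {i : Fin n} (hd' : ValidInstance d') (hagree : ∀ j, j ≠ i → d' j = d j)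
    (hA : IsFgAlloc g d A) (hA' : IsFgAlloc g d' A') : util (d i) (A' i) ≤ util (d i) (A i) := by
  by_contra! hlt
  have hF := hA.feasible
  have hF' := hA'.feasible
  have hgrow : ∀ r, A i r < A' i r := hA.mul_lt_apply_of_util_lt hd (hF'.1 i) hlt
  have hi_raised := hA.one_div_lt_util_of_util_lt hd hd' hA' hlt
  obtain ⟨r, hr⟩ := hA.exists_sum_eq_one
  obtain ⟨j, hji, hj⟩ := Finset.exists_ne_lt_of_lt_of_sum_le ((hF'.2 r).trans hr.ge) (hgrow r)
  have hdj := hagree j hji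
  have hshrink : util (d j) (A' j) < util (d j) (A j) := by
    rw [hA.eq_util_mul hd, hA'.eq_util_mul hd', hdj] at hj
    exact lt_of_mul_lt_mul_right hj (hd.pos j r).le
  have hj_raised : (1 : ℝ) / n < util (d j) (A j) := (hdj ▸ hA'.si hd' j).trans_lt hshrink
  have hshrink' : ∀ r, A' j r < A j r := by
    intro r
    rw [hA.eq_util_mul hd, hA'.eq_util_mul hd', hdj]
    exact mul_lt_mul_of_pos_right hshrink (hd.pos j r)
  have := calc
    g (A' i) ≤ g (A' j) := hA'.g_le_of_one_div_lt_util hd' hi_raised j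
    _ < g (A j) := hg.lt_of_feasible hF' hF hshrink'
    _ ≤ g (A i) := hA.g_le_of_one_div_lt_util hd hj_raised i
    _ < g (A' i) := hg.lt_of_feasible hF hF' hgrow
  exact this.false

end IsFgAlloc

end Allocations

theorem fg_properties_general (m : ℕ) (g : (Fin m → ℝ) → ℝ)
    (hg : MonotoneOn01 g) :
    (∀ (n : ℕ), 0 < n → ∀ d A : Fin n → Fin m → ℝ, ValidInstance d →
      IsFgAlloc g d A → SI d A ∧ EF d A ∧ PO d A) ∧
    (∀ (n : ℕ), 0 < n → ∀ (d d' : Fin n → Fin m → ℝ) (i : Fin n),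
      ValidInstance d → ValidInstance d' → (∀ j, j ≠ i → d' j = d j) →
      ∀ A A' : Fin n → Fin m → ℝ, IsFgAlloc g d A → IsFgAlloc g d' A' →
        util (d i) (A' i) ≤ util (d i) (A i)) :=
  ⟨fun _ _ _ _ hd hA => ⟨hA.si hd, hA.ef hg hd, hA.po hd⟩,
    fun _ _ _ _ _ hd hd' hagree _ _ hA hA' => hA.util_le_of_misreport hg hd hd' hagree hA'⟩

/-- For every `m ≥ 2` and strictly monotone `g`, the mechanism `F_g` satisfies
SI, EF, PO and SP. -/
theorem fg_properties (m : ℕ) (hm : 2 ≤ m) (g : (Fin m → ℝ) → ℝ)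
    (hg : MonotoneOn01 g) :
    (∀ (n : ℕ), 0 < n → ∀ d A : Fin n → Fin m → ℝ, ValidInstance d →
      IsFgAlloc g d A → SI d A ∧ EF d A ∧ PO d A) ∧
    (∀ (n : ℕ), 0 < n → ∀ (d d' : Fin n → Fin m → ℝ) (i : Fin n),
      ValidInstance d → ValidInstance d' → (∀ j, j ≠ i → d' j = d j) →
      ∀ A A' : Fin n → Fin m → ℝ, IsFgAlloc g d A → IsFgAlloc g d' A' →
        util (d i) (A' i) ≤ util (d i) (A i)) :=
  fg_properties_general m g hg
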